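/- arXiv:2308.01296 — 2 statements merged into one kernel-verified Lean document; each statement's English description precedes it below -/
import Mathlib

section
/- (HieAvg global-aggregation estimation error bound.) Let N be a positive natural number and let the index set Fin N be partitioned into a set 𝕄 of in-time edge servers and a set 𝕊 of stragglers. Let p : Fin N → ℝ satisfy p(i) ≥ 0 for all i and Σ_{i∈Fin N} p(i) = 1. For each i ∈ Fin N let w(i) ∈ EuclideanSpace ℝ (Fin n) be its true current edge model. For each straggler s ∈ 𝕊, let w'(s) be its previous-round edge model, Δ(s) the average of its historical weight differences, γ(s) ∈ [0,1] a decay factor, and δ(s) ≥ 0 a real with ‖(w(s) − w'(s)) − Δ(s)‖ ≤ δ(s). Define ŵ(s) := w'(s) + Δ(s) and the HieAvg global aggregate w̄ := Σ_{m∈𝕄} p(m)·w(m) + Σ_{s∈𝕊} p(s)·γ(s)·ŵ(s). Then ‖w̄ − Σ_{i∈Fin N} p(i)·w(i)‖ ≤ Σ_{s∈𝕊} p(s)·(δ(s) + (1 − γ(s))·‖ŵ(s)‖). -/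
/-!
Each in-time server contributes `p m • w m` to both the HieAvg aggregate and the ideal average,
so their difference is the sum over the stragglers of `p s • (γ s • ŵ s - w s)`. Writing
`γ s • ŵ s - w s = (ŵ s - w s) - (1 - γ s) • ŵ s`, the first term is bounded by the variance
bound `δ s` and the second by the decay loss `(1 - γ s) * ‖ŵ s‖`.
-/

theorem Finset.sum_add_sum_sub_sum_univ_of_partition {ι β : Type*} [Fintype ι] [DecidableEq ι]
    [AddCommGroup β] {M S : Finset ι} (hdisj : Disjoint M S) (hunion : M ∪ S = Finset.univ)
    (f g : ι → β) :
    (∑ i ∈ M, f i + ∑ i ∈ S, g i) - ∑ i, f i = ∑ i ∈ S, (g i - f i) := by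
  rw [← hunion, Finset.sum_union hdisj, Finset.sum_sub_distrib]
  abel

theorem norm_mul_smul_sub_smul_le {E : Type*} [SeminormedAddCommGroup E] [NormedSpace ℝ E]
    {c γ : ℝ} (hc : 0 ≤ c) (hγ : γ ≤ 1) (x y : E) :
    ‖(c * γ) • x - c • y‖ ≤ c * (‖y - x‖ + (1 - γ) * ‖x‖) := by
  have hsplit : (c * γ) • x - c • y = c • ((x - y) - (1 - γ) • x) := by module
  rw [hsplit, norm_smul, Real.norm_of_nonneg hc]
  gcongr
  calc ‖(x - y) - (1 - γ) • x‖ ≤ ‖x - y‖ + ‖(1 - γ) • x‖ := norm_sub_le _ _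
    _ = ‖y - x‖ + (1 - γ) * ‖x‖ := by
      rw [norm_sub_rev, norm_smul, Real.norm_of_nonneg (sub_nonneg.mpr hγ)]

theorem hieavg_global_aggregation_error_general
    (n N : ℕ)
    (M S : Finset (Fin N)) (hdisj : Disjoint M S) (hunion : M ∪ S = Finset.univ)
    (p : Fin N → ℝ) (hp : ∀ i, 0 ≤ p i)
    (w w' Δ : Fin N → EuclideanSpace ℝ (Fin n))
    (γ δ : Fin N → ℝ)
    (hγ : ∀ s ∈ S, γ s ∈ Set.Icc (0 : ℝ) 1)
    (hvar : ∀ s ∈ S, ‖(w s - w' s) - Δ s‖ ≤ δ s) :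
    ‖(∑ m ∈ M, p m • w m + ∑ s ∈ S, (p s * γ s) • (w' s + Δ s))
        - ∑ i : Fin N, p i • w i‖ ≤
      ∑ s ∈ S, p s * (δ s + (1 - γ s) * ‖w' s + Δ s‖) := by
  rw [Finset.sum_add_sum_sub_sum_univ_of_partition hdisj hunion]
  refine (norm_sum_le _ _).trans (Finset.sum_le_sum fun s hs => ?_)
  have hδ : ‖w s - (w' s + Δ s)‖ ≤ δ s := sub_sub (w s) (w' s) (Δ s) ▸ hvar s hs
  calc ‖(p s * γ s) • (w' s + Δ s) - p s • w s‖
      ≤ p s * (‖w s - (w' s + Δ s)‖ + (1 - γ s) * ‖w' s + Δ s‖) :=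
        norm_mul_smul_sub_smul_le (hp s) (hγ s hs).2 _ _
    _ ≤ p s * (δ s + (1 - γ s) * ‖w' s + Δ s‖) := by gcongr; exact hp s

/-- HieAvg global-aggregation estimation error bound: with aggregation weights
`p i ≥ 0` summing to 1, replacing each straggler edge server's model by the
decayed estimate `γ s • (w' s + Δ s)` keeps the global aggregate within
`Σ_{s∈𝕊} p s · (δ s + (1 − γ s)·‖w' s + Δ s‖)` of the ideal weighted average. -/
theorem hieavg_global_aggregation_error
    (n N : ℕ) (hN : 0 < N)
    (M S : Finset (Fin N)) (hdisj : Disjoint M S) (hunion : M ∪ S = Finset.univ)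
    (p : Fin N → ℝ) (hp : ∀ i, 0 ≤ p i) (hpsum : ∑ i : Fin N, p i = 1)
    (w w' Δ : Fin N → EuclideanSpace ℝ (Fin n))
    (γ δ : Fin N → ℝ)
    (hγ : ∀ s ∈ S, γ s ∈ Set.Icc (0 : ℝ) 1)
    (hδ : ∀ s ∈ S, 0 ≤ δ s)
    (hvar : ∀ s ∈ S, ‖(w s - w' s) - Δ s‖ ≤ δ s) :
    ‖(∑ m ∈ M, p m • w m + ∑ s ∈ S, (p s * γ s) • (w' s + Δ s))
        - ∑ i : Fin N, p i • w i‖ ≤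
      ∑ s ∈ S, p s * (δ s + (1 - γ s) * ‖w' s + Δ s‖) :=
  hieavg_global_aggregation_error_general n N M S hdisj hunion p hp w w' Δ γ δ hγ hvar
end

section
/- (Descent under an additive update perturbation.) Let F : EuclideanSpace ℝ (Fin n) → ℝ be differentiable with gradient Lipschitz with constant L ≥ 0, let η > 0, ε ≥ 0, and let w, e ∈ EuclideanSpace ℝ (Fin n) satisfy ‖e‖ ≤ ε. Then F(w − η·∇F(w) + e) ≤ F(w) − (η/2)·(1 − 2Lη)·‖∇F(w)‖² + (1/(2η) + L)·ε². -/
/-!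
For a function with `K`-Lipschitz gradient, `t ↦ F (x + t • v) - t ⟪∇F x, v⟫ - K t² ‖v‖² / 2`
has nonpositive derivative on `[0, 1]`, which gives the descent lemma
`F (x + v) ≤ F x + ⟪∇F x, v⟫ + K/2 ‖v‖²`. For the perturbed step `v = e - η ∇F w` the linear
term is `⟪∇F w, e⟫ - η ‖∇F w‖²`, Young's inequality bounds `⟪∇F w, e⟫` by
`η/2 ‖∇F w‖² + ‖e‖²/(2η)`, and `‖v‖² ≤ 2 ‖e‖² + 2 η² ‖∇F w‖²`.
-/

open InnerProductSpace Set
open scoped Gradient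

section Descent

variable {H : Type*} [NormedAddCommGroup H] [InnerProductSpace ℝ H] [CompleteSpace H]
  {F : H → ℝ}

theorem hasDerivAt_comp_add_smul_of_differentiable (hF : Differentiable ℝ F) (x v : H)
    (t : ℝ) : HasDerivAt (fun s : ℝ => F (x + s • v)) ⟪∇ F (x + t • v), v⟫_ℝ t := by
  have hline : HasDerivAt (fun s : ℝ => x + s • v) v t := by
    simpa using ((hasDerivAt_id t).smul_const v).const_add x
  have := (hF _).hasGradientAt.hasFDerivAt.comp_hasDerivAt t hline
  rwa [toDual_apply_apply] at this

theorem inner_gradient_sub_le_of_lipschitzWith {K : NNReal} (hlip : LipschitzWith K (∇ F))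
    (x y v : H) : ⟪∇ F y - ∇ F x, v⟫_ℝ ≤ K * ‖y - x‖ * ‖v‖ :=
  calc ⟪∇ F y - ∇ F x, v⟫_ℝ ≤ ‖∇ F y - ∇ F x‖ * ‖v‖ := real_inner_le_norm _ _
    _ ≤ K * ‖y - x‖ * ‖v‖ := by
        gcongr
        simpa only [dist_eq_norm] using hlip.dist_le_mul y x

theorem le_add_inner_gradient_add_sq_of_lipschitzWith (hF : Differentiable ℝ F) {K : NNReal}
    (hlip : LipschitzWith K (∇ F)) (x v : H) :
    F (x + v) ≤ F x + ⟪∇ F x, v⟫_ℝ + K / 2 * ‖v‖ ^ 2 := by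
  set φ : ℝ → ℝ := fun t => F (x + t • v) - t * ⟪∇ F x, v⟫_ℝ - K / 2 * t ^ 2 * ‖v‖ ^ 2
  have hφ : ∀ t, HasDerivAt φ (⟪∇ F (x + t • v), v⟫_ℝ - ⟪∇ F x, v⟫_ℝ - K * t * ‖v‖ ^ 2) t := by
    intro t
    have hquad := ((hasDerivAt_pow 2 t).const_mul ((K : ℝ) / 2)).mul_const (‖v‖ ^ 2)
    refine (((hasDerivAt_comp_add_smul_of_differentiable hF x v t).sub
      ((hasDerivAt_id t).mul_const ⟪∇ F x, v⟫_ℝ)).sub hquad).congr_deriv ?_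
    push_cast
    ring
  have hanti : AntitoneOn φ (Icc 0 1) := by
    refine antitoneOn_of_hasDerivWithinAt_nonpos (convex_Icc 0 1)
      (fun t _ => (hφ t).continuousAt.continuousWithinAt)
      (fun t _ => (hφ t).hasDerivWithinAt) fun t ht => ?_
    rw [interior_Icc] at ht
    have := inner_gradient_sub_le_of_lipschitzWith hlip x (x + t • v) v
    rw [inner_sub_left, add_sub_cancel_left, norm_smul, Real.norm_of_nonneg ht.1.le] at this
    linarith
  have := hanti (left_mem_Icc.2 zero_le_one) (right_mem_Icc.2 zero_le_one) zero_le_one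
  simp only [φ, zero_smul, one_smul, add_zero, zero_mul, one_mul, sub_zero] at this
  linarith

theorem apply_sub_smul_gradient_add_le (hF : Differentiable ℝ F) {K : NNReal}
    (hlip : LipschitzWith K (∇ F)) {η : ℝ} (hη : 0 < η) (w e : H) :
    F (w - η • ∇ F w + e) ≤
      F w - η / 2 * (1 - 2 * K * η) * ‖∇ F w‖ ^ 2 + (1 / (2 * η) + K) * ‖e‖ ^ 2 := by
  set g := ∇ F w
  have hdesc := le_add_inner_gradient_add_sq_of_lipschitzWith hF hlip w (e - η • g)
  have hinner : ⟪g, e - η • g⟫_ℝ = ⟪g, e⟫_ℝ - η * ‖g‖ ^ 2 := by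
    rw [inner_sub_right, real_inner_smul_right, real_inner_self_eq_norm_sq]
  have hyoung : ⟪g, e⟫_ℝ ≤ η / 2 * ‖g‖ ^ 2 + 1 / (2 * η) * ‖e‖ ^ 2 := by
    have hsq : 0 ≤ (η * ‖g‖ - ‖e‖) ^ 2 / (2 * η) := by positivity
    have hexpand : (η * ‖g‖ - ‖e‖) ^ 2 / (2 * η) =
        η / 2 * ‖g‖ ^ 2 + 1 / (2 * η) * ‖e‖ ^ 2 - ‖g‖ * ‖e‖ := by
      field_simp
      ring
    linarith [real_inner_le_norm g e]
  have hnorm : ‖e - η • g‖ ^ 2 ≤ 2 * (‖e‖ ^ 2 + η ^ 2 * ‖g‖ ^ 2) :=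
    calc ‖e - η • g‖ ^ 2 ≤ (‖e‖ + η * ‖g‖) ^ 2 := by
          gcongr
          simpa [norm_smul, abs_of_pos hη] using norm_sub_le e (η • g)
      _ ≤ 2 * (‖e‖ ^ 2 + η ^ 2 * ‖g‖ ^ 2) := by
          simpa [mul_pow] using add_sq_le (a := ‖e‖) (b := η * ‖g‖)
  have hquad : (K : ℝ) / 2 * ‖e - η • g‖ ^ 2 ≤ K / 2 * (2 * (‖e‖ ^ 2 + η ^ 2 * ‖g‖ ^ 2)) := by
    gcongr
  rw [show w - η • g + e = w + (e - η • g) by abel]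
  linarith

end Descent

theorem descent_additive_perturbation_general
    (n : ℕ) (F : EuclideanSpace ℝ (Fin n) → ℝ)
    (hF : Differentiable ℝ F)
    (L : ℝ) (hL : 0 ≤ L)
    (hlip : LipschitzWith L.toNNReal (fun w => gradient F w))
    (η ε : ℝ) (hη : 0 < η)
    (w e : EuclideanSpace ℝ (Fin n))
    (he : ‖e‖ ≤ ε) :
    F (w - η • gradient F w + e) ≤
      F w - (η / 2) * (1 - 2 * L * η) * ‖gradient F w‖ ^ 2
        + (1 / (2 * η) + L) * ε ^ 2 := by
  have hstep := apply_sub_smul_gradient_add_le hF hlip hη w e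
  rw [Real.coe_toNNReal L hL] at hstep
  refine hstep.trans ?_
  gcongr

/-- Descent under an additive update perturbation: one perturbed gradient step
`w - η • ∇F(w) + e` with `‖e‖ ≤ ε` descends up to an `ε²` error term. -/
theorem descent_additive_perturbation
    (n : ℕ) (F : EuclideanSpace ℝ (Fin n) → ℝ)
    (hF : Differentiable ℝ F)
    (L : ℝ) (hL : 0 ≤ L)
    (hlip : LipschitzWith L.toNNReal (fun w => gradient F w))
    (η ε : ℝ) (hη : 0 < η) (hε : 0 ≤ ε)
    (w e : EuclideanSpace ℝ (Fin n))
    (he : ‖e‖ ≤ ε) :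
    F (w - η • gradient F w + e) ≤
      F w - (η / 2) * (1 - 2 * L * η) * ‖gradient F w‖ ^ 2
        + (1 / (2 * η) + L) * ε ^ 2 :=
  descent_additive_perturbation_general n F hF L hL hlip η ε hη w e he
end
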